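/- Let q be a prime power, a ∈ F_{q²}*, and α an integer with 0 ≤ α ≤ q-1. Then Σ_{x ∈ F_{q²}} (a·x + x^(3q-2))^(α + (q-1-α)q) = -a^((α+1)(1-q)) · Σ' binom(α,i)·binom(q-1-α,j)·a^(-i-jq), where the sum Σ' runs over pairs (i,j) with 0 ≤ i ≤ α, 0 ≤ j ≤ q-1-α, and -α-1+3(i-j) ≡ 0 (mod q+1). -/

import Mathlib

/-! Since `q` is a power of the characteristic, `(a x + x ^ (3q-2)) ^ (α + βq)` with `β = q-1-α`
equals `(a x + x ^ (3q-2)) ^ α * (a^q x^q + x ^ ((3q-2)q)) ^ β`. Expanding both binomials gives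
monomials `x ^ ((q-1)(q-α+3i+3qj))`, never constant. Summing over `F` kills all of them except
those whose exponent is divisible by `q²-1`, i.e. those with `(q+1) ∣ -α-1+3(i-j)`, which
contribute `-1` times their coefficient; the power of `a` in the coefficient is then reduced
modulo `q²-1`. -/

open Finset

theorem FiniteField.sum_pow_of_ne_zero {F : Type*} [Field F] [Fintype F] {M : ℕ} (hM : M ≠ 0) :
    ∑ x : F, x ^ M = if Fintype.card F - 1 ∣ M then -1 else 0 := by
  classical
  rw [← FiniteField.sum_pow_units]
  have h_units := sum_map (univ : Finset Fˣ) ⟨Units.val, Units.val_injective⟩ (· ^ M)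
  refine (sum_subset (subset_univ _) fun x _ hx => ?_).symm.trans h_units
  obtain rfl : x = 0 := by
    by_contra h
    exact hx (mem_map.mpr ⟨Units.mk0 x h, mem_univ _, rfl⟩)
  exact zero_pow hM

theorem FiniteField.zpow_eq_zpow_of_dvd_sub {F : Type*} [Field F] [Fintype F] {a : F} (ha : a ≠ 0)
    {m n : ℤ} (h : ((Fintype.card F - 1 : ℕ) : ℤ) ∣ m - n) : a ^ m = a ^ n := by
  obtain ⟨k, hk⟩ := h
  rw [show m = n + (Fintype.card F - 1 : ℕ) * k by omega, zpow_add₀ ha, zpow_mul, zpow_natCast,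
    FiniteField.pow_card_sub_one_eq_one a ha, one_zpow, mul_one]

theorem add_pow_of_card_eq_pow {R : Type*} [CommRing R] [IsDomain R] [Fintype R] {q n : ℕ}
    (hq : IsPrimePow q) (hR : Fintype.card R = q ^ n) (x y : R) :
    (x + y) ^ q = x ^ q + y ^ q := by
  obtain ⟨p, k, hp, -, rfl⟩ := hq
  have : Fact p.Prime := ⟨Nat.prime_iff.mpr hp⟩
  have : CharP R p := charP_of_card_eq_prime_pow (hR.trans (pow_mul p k n).symm)
  exact add_pow_char_pow x y p k

theorem mul_add_pow_pow_add_mul_eq_sum {R : Type*} [CommSemiring R] {q : ℕ}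
    (frob : ∀ y z : R, (y + z) ^ q = y ^ q + z ^ q) (a x : R) (m α β : ℕ) :
    (a * x + x ^ m) ^ (α + β * q) =
      ∑ i ∈ range (α + 1), ∑ j ∈ range (β + 1),
        (α.choose i * β.choose j : R) * a ^ (α - i + (β - j) * q) *
          x ^ (m * i + (α - i) + q * (m * j + (β - j))) := by
  rw [add_comm (a * x), pow_add, mul_comm β, pow_mul, frob, add_pow, add_pow, sum_mul_sum]
  refine sum_congr rfl fun i _ => sum_congr rfl fun j _ => ?_
  ring

section Exponents

variable {F : Type*} [Field F] [Fintype F] {q α i j : ℕ}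

theorem exponent_eq_sub_one_mul (hα : α ≤ q - 1) (hi : i ≤ α) (hj : j ≤ q - 1 - α) :
    (3 * q - 2) * i + (α - i) + q * ((3 * q - 2) * j + (q - 1 - α - j)) =
      (q - 1) * (q - α + 3 * i + 3 * q * j) := by
  rcases Nat.eq_zero_or_pos q with rfl | hq
  · obtain rfl : α = 0 := by omega
    obtain rfl : i = 0 := by omega
    simp
  zify [hi, hj, hα, (by omega : α ≤ q), (by omega : 1 ≤ q), (by omega : 2 ≤ 3 * q)]
  ring

theorem sq_sub_one_dvd_exponent_iff (hq : 2 ≤ q) (hα : α ≤ q - 1) :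
    q ^ 2 - 1 ∣ (q - 1) * (q - α + 3 * i + 3 * q * j) ↔
      ((q : ℤ) + 1) ∣ (-(α : ℤ) - 1 + 3 * ((i : ℤ) - (j : ℤ))) := by
  rw [← Int.natCast_dvd_natCast]
  push_cast [Nat.one_le_pow 2 q (by omega), (by omega : α ≤ q), (by omega : 1 ≤ q)]
  rw [show ((q : ℤ) ^ 2 - 1) = ((q : ℤ) - 1) * (q + 1) by ring,
    mul_dvd_mul_iff_left (by omega),
    show (q : ℤ) - α + 3 * i + 3 * q * j = (q + 1) * (1 + 3 * j) + (-α - 1 + 3 * (i - j)) by ring,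
    dvd_add_right (dvd_mul_right _ _)]

theorem pow_eq_zpow_mul_zpow_of_card_eq_sq (hF : Fintype.card F = q ^ 2) {a : F} (ha : a ≠ 0)
    (hα : α ≤ q - 1) (hi : i ≤ α) (hj : j ≤ q - 1 - α) :
    a ^ (α - i + (q - 1 - α - j) * q) =
      a ^ (((α : ℤ) + 1) * (1 - (q : ℤ))) * a ^ (-(i : ℤ) - (j : ℤ) * (q : ℤ)) := by
  rw [← zpow_add₀ ha, ← zpow_natCast]
  refine FiniteField.zpow_eq_zpow_of_dvd_sub ha ⟨1, ?_⟩
  have hq : 0 < q := Nat.pos_of_ne_zero (by rintro rfl; simp at hF)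
  push_cast [hF, hα, hi, hj, Nat.one_le_pow 2 q hq, (by omega : 1 ≤ q)]
  ring

theorem sum_monomial_eq (hq : 2 ≤ q) (hF : Fintype.card F = q ^ 2) {a : F} (ha : a ≠ 0)
    (hα : α ≤ q - 1) (hi : i ≤ α) (hj : j ≤ q - 1 - α) :
    ∑ x : F, (α.choose i * (q - 1 - α).choose j : F) * a ^ (α - i + (q - 1 - α - j) * q) *
        x ^ ((3 * q - 2) * i + (α - i) + q * ((3 * q - 2) * j + (q - 1 - α - j))) =
      -a ^ (((α : ℤ) + 1) * (1 - (q : ℤ))) *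
        if ((q : ℤ) + 1) ∣ (-(α : ℤ) - 1 + 3 * ((i : ℤ) - (j : ℤ))) then
          (α.choose i : F) * ((q - 1 - α).choose j : F) * a ^ (-(i : ℤ) - (j : ℤ) * (q : ℤ))
        else 0 := by
  have hexp_ne_zero : (q - 1) * (q - α + 3 * i + 3 * q * j) ≠ 0 :=
    Nat.mul_ne_zero (by omega) (by omega)
  rw [← mul_sum, exponent_eq_sub_one_mul hα hi hj, FiniteField.sum_pow_of_ne_zero hexp_ne_zero,
    hF, pow_eq_zpow_mul_zpow_of_card_eq_sq hF ha hα hi hj]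
  simp only [sq_sub_one_dvd_exponent_iff hq hα]
  split_ifs <;> ring

end Exponents

theorem power_sum_double_sum_formula
    (q : ℕ) (hq : IsPrimePow q)
    (F : Type*) [Field F] [Fintype F] (hF : Fintype.card F = q ^ 2)
    (a : F) (ha : a ≠ 0)
    (α : ℕ) (hα : α ≤ q - 1) :
    ∑ x : F, (a * x + x ^ (3 * q - 2)) ^ (α + (q - 1 - α) * q) =
      -(a ^ (((α : ℤ) + 1) * (1 - (q : ℤ)))) *
        ∑ i ∈ Finset.range (α + 1), ∑ j ∈ Finset.range (q - 1 - α + 1),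
          if ((q : ℤ) + 1) ∣ (-(α : ℤ) - 1 + 3 * ((i : ℤ) - (j : ℤ))) then
            (Nat.choose α i : F) * (Nat.choose (q - 1 - α) j : F) *
              a ^ (-(i : ℤ) - (j : ℤ) * (q : ℤ))
          else 0 := by
  simp_rw [mul_add_pow_pow_add_mul_eq_sum (add_pow_of_card_eq_pow hq hF), mul_sum]
  rw [sum_comm]
  refine sum_congr rfl fun i hi => ?_
  rw [sum_comm]
  refine sum_congr rfl fun j hj => ?_
  exact sum_monomial_eq hq.two_le hF ha hα (mem_range_succ_iff.mp hi) (mem_range_succ_iff.mp hj)
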